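/- arXiv:2106.07154 — 2 statements merged into one kernel-verified Lean document; each statement's English description precedes it below -/
import Mathlib

section
/- Suppose h₀ > 0 and for every h ∈ [0, h₀] the forward-Euler map E_h(y) = y + h·f(y) is nonexpansive, i.e. ‖E_h(y) − E_h(z)‖ ≤ ‖y − z‖ for all y, z ∈ E. Then for every h ∈ [0, h₀] the SSPRK3 step is also nonexpansive: ‖Φ₃(h,f,y) − Φ₃(h,f,z)‖ ≤ ‖y − z‖ for all y, z ∈ E. -/
/-!
Writing `E_h y = y + h • f y`, the SSPRK3 step is the convex combination
`Φ₃ = ⅓ • id + ⅔ • E_h ∘ (¾ • id + ¼ • E_h ∘ E_h)`. Compositions of nonexpansive maps are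
nonexpansive, and a convex combination of `K`-Lipschitz maps is `K`-Lipschitz, so `Φ₃` is
nonexpansive whenever `E_h` is.
-/

/-- One step of the SSPRK3 method with step size `h` for the ODE `y' = f(y)`:
`Φ₃(h,f,y) = (1/3)y + (2/3)y₂ + (2/3)h·f(y₂)` where `y₁ = y + h·f(y)` and
`y₂ = (3/4)y + (1/4)y₁ + (1/4)h·f(y₁)`. -/
noncomputable def ssprk3Step {E : Type*} [AddCommGroup E] [Module ℝ E]
    (h : ℝ) (f : E → E) (y : E) : E :=
  let y₁ := y + h • f y
  let y₂ := (3 / 4 : ℝ) • y + (1 / 4 : ℝ) • y₁ + ((1 / 4 : ℝ) * h) • f y₁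
  (1 / 3 : ℝ) • y + (2 / 3 : ℝ) • y₂ + ((2 / 3 : ℝ) * h) • f y₂

open scoped NNReal

theorem LipschitzWith.smul_add_smul {α E : Type*} [PseudoEMetricSpace α]
    [SeminormedAddCommGroup E] [NormedSpace ℝ E] {K : ℝ≥0} {g₁ g₂ : α → E}
    (hg₁ : LipschitzWith K g₁) (hg₂ : LipschitzWith K g₂) {a b : ℝ} (ha : 0 ≤ a) (hb : 0 ≤ b)
    (hab : a + b = 1) : LipschitzWith K fun x ↦ a • g₁ x + b • g₂ x := by
  have h := ((lipschitzWith_smul a).comp hg₁).add ((lipschitzWith_smul b).comp hg₂)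
  have hK : ‖a‖₊ * K + ‖b‖₊ * K = K := by
    ext
    simp [Real.norm_of_nonneg ha, Real.norm_of_nonneg hb, ← add_mul, hab]
  rwa [hK] at h

def eulerStep {E : Type*} [AddCommGroup E] [Module ℝ E] (h : ℝ) (f : E → E) (y : E) : E :=
  y + h • f y

theorem ssprk3Step_eq_convex_comb_eulerStep {E : Type*} [AddCommGroup E] [Module ℝ E]
    (h : ℝ) (f : E → E) :
    ssprk3Step h f = fun y ↦ (1 / 3 : ℝ) • y + (2 / 3 : ℝ) •
      eulerStep h f ((3 / 4 : ℝ) • y + (1 / 4 : ℝ) • eulerStep h f (eulerStep h f y)) := by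
  funext y
  have hy₂ : (3 / 4 : ℝ) • y + (1 / 4 : ℝ) • (y + h • f y) + ((1 / 4 : ℝ) * h) • f (y + h • f y) =
      (3 / 4 : ℝ) • y + (1 / 4 : ℝ) • eulerStep h f (eulerStep h f y) := by
    simp only [eulerStep]
    module
  dsimp only [ssprk3Step]
  rw [hy₂]
  generalize (3 / 4 : ℝ) • y + (1 / 4 : ℝ) • eulerStep h f (eulerStep h f y) = y₂
  simp only [eulerStep]
  module

theorem lipschitzWith_one_ssprk3Step {E : Type*} [SeminormedAddCommGroup E] [NormedSpace ℝ E]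
    {h : ℝ} {f : E → E} (hE : LipschitzWith 1 (eulerStep h f)) :
    LipschitzWith 1 (ssprk3Step h f) := by
  have hy₂ : LipschitzWith 1 fun y ↦
      (3 / 4 : ℝ) • y + (1 / 4 : ℝ) • eulerStep h f (eulerStep h f y) :=
    LipschitzWith.id.smul_add_smul (by simpa only [mul_one, Function.comp_def] using hE.comp hE)
      (by norm_num) (by norm_num) (by norm_num)
  rw [ssprk3Step_eq_convex_comb_eulerStep]
  exact LipschitzWith.id.smul_add_smul
    (by simpa only [mul_one, Function.comp_def] using hE.comp hy₂)
    (by norm_num) (by norm_num) (by norm_num)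

theorem ssprk3_nonexpansive_of_euler_nonexpansive_general
    {E : Type*} [NormedAddCommGroup E] [NormedSpace ℝ E]
    (f : E → E) (h₀ : ℝ)
    (heuler : ∀ h ∈ Set.Icc (0 : ℝ) h₀, ∀ y z : E,
      ‖(y + h • f y) - (z + h • f z)‖ ≤ ‖y - z‖) :
    ∀ h ∈ Set.Icc (0 : ℝ) h₀, ∀ y z : E,
      ‖ssprk3Step h f y - ssprk3Step h f z‖ ≤ ‖y - z‖ := by
  intro h hh y z
  have hE : LipschitzWith 1 (eulerStep h f) :=
    LipschitzWith.mk_one fun y z ↦ by simpa only [dist_eq_norm, eulerStep] using heuler h hh y z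
  simpa only [dist_eq_norm, NNReal.coe_one, one_mul] using
    (lipschitzWith_one_ssprk3Step hE).dist_le_mul y z

/-- If the forward-Euler map `y ↦ y + h·f(y)` is nonexpansive for every `h ∈ [0, h₀]`,
then the SSPRK3 step is nonexpansive for every `h ∈ [0, h₀]`. -/
theorem ssprk3_nonexpansive_of_euler_nonexpansive
    {E : Type*} [NormedAddCommGroup E] [NormedSpace ℝ E]
    (f : E → E) (h₀ : ℝ) (hh₀ : 0 < h₀)
    (heuler : ∀ h ∈ Set.Icc (0 : ℝ) h₀, ∀ y z : E,
      ‖(y + h • f y) - (z + h • f z)‖ ≤ ‖y - z‖) :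
    ∀ h ∈ Set.Icc (0 : ℝ) h₀, ∀ y z : E,
      ‖ssprk3Step h f y - ssprk3Step h f z‖ ≤ ‖y - z‖ :=
  ssprk3_nonexpansive_of_euler_nonexpansive_general f h₀ heuler
end

section
/- Let f : ℝ^d → ℝ^d be three times continuously differentiable and let y : ℝ → ℝ^d be differentiable with y'(t) = f(y(t)) for all t. Then for every t₀ ∈ ℝ the one-step (local truncation) error of SSPRK3 is of fourth order: there exist constants K > 0 and δ > 0 such that ‖Φ₃(h, f, y(t₀)) − y(t₀ + h)‖ ≤ K·h⁴ for all h ∈ (0, δ]. -/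
/-!
Write the step from `y₀ = y(t₀)` as `y₀ + h • M(h)` with the averaged slope
`M(h) = (f y₀ + f y₁ + 4 f y₂) / 6`. Then `Φ₃(h) - y(t₀ + h)` is
`h • (M(h) - T₂M(h)) - (y(t₀ + h) - T₃y(t₀ + h))` plus `y₀ + h • T₂M(h) - T₃y(t₀ + h)`,
where `Tₙ` denotes Taylor polynomials. Taylor's theorem makes the first two terms `O(h⁴)`,
since `M` is `C³` and `y` is `C⁴`. The last term vanishes: the chain rule along the stages gives
`M(0) = f`, `M'(0) = f'f / 2` and `M''(0) = (f''(f, f) + f'f'f) / 3`, which are `y'`, `y'' / 2`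
and `y''' / 3` at `t₀`.
-/

open Set Topology Asymptotics

theorem isBigO_sub_taylorWithinEval_univ {E : Type*} [NormedAddCommGroup E] [NormedSpace ℝ E]
    {g : ℝ → E} {n : ℕ} (hg : ContDiff ℝ (n + 1) g) (x₀ : ℝ) :
    (fun x ↦ g x - taylorWithinEval g n univ x₀ x) =O[𝓝 x₀] fun x ↦ (x - x₀) ^ (n + 1) := by
  set c := ((n + 1 : ℝ) * n.factorial)⁻¹ • iteratedDeriv (n + 1) g x₀
  have hsucc : (fun x ↦ g x - taylorWithinEval g n univ x₀ x) =
      fun x ↦ (g x - taylorWithinEval g (n + 1) univ x₀ x) + (x - x₀) ^ (n + 1) • c := by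
    ext x
    rw [taylorWithinEval_succ, iteratedDerivWithin_univ, mul_comm, mul_smul]
    abel
  rw [hsucc]
  refine (taylor_isLittleO_univ (mod_cast hg)).isBigO.add (.of_bound ‖c‖ (.of_forall fun x ↦ ?_))
  rw [norm_smul, mul_comm]

theorem exists_pos_bound_Ioc_of_isBigO_pow {E : Type*} [NormedAddCommGroup E] {g : ℝ → E}
    {n : ℕ} (hg : g =O[𝓝 0] fun h ↦ h ^ n) :
    ∃ K > (0 : ℝ), ∃ δ > (0 : ℝ), ∀ h ∈ Ioc (0 : ℝ) δ, ‖g h‖ ≤ K * h ^ n := by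
  obtain ⟨K, hK, hKg⟩ := hg.exists_pos
  obtain ⟨ε, hε, hεg⟩ := Metric.eventually_nhds_iff.1 hKg.bound
  refine ⟨K, hK, ε / 2, half_pos hε, fun h ⟨h0, hδ⟩ ↦ ?_⟩
  have := hεg (show dist h 0 < ε by rw [Real.dist_0_eq_abs, abs_of_pos h0]; linarith)
  rwa [norm_pow, Real.norm_of_nonneg h0.le] at this

section ODE

variable {E : Type*} [NormedAddCommGroup E] [NormedSpace ℝ E] {f : E → E} {y : ℝ → E}

theorem deriv_eq_comp_of_hasDerivAt (hy : ∀ t, HasDerivAt y (f (y t)) t) : deriv y = f ∘ y :=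
  funext fun t ↦ (hy t).deriv

theorem contDiff_succ_of_hasDerivAt {n : ℕ} (hf : ContDiff ℝ n f)
    (hy : ∀ t, HasDerivAt y (f (y t)) t) : ContDiff ℝ (n + 1) y := by
  have hyd : Differentiable ℝ y := fun t ↦ (hy t).differentiableAt
  induction n with
  | zero =>
    refine contDiff_succ_iff_deriv.2 ⟨hyd, by simp, ?_⟩
    rw [deriv_eq_comp_of_hasDerivAt hy]
    exact (contDiff_zero.2 hf.continuous).comp (contDiff_zero.2 hyd.continuous)
  | succ k ih =>
    refine contDiff_succ_iff_deriv.2 ⟨hyd, by simp, ?_⟩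
    rw [deriv_eq_comp_of_hasDerivAt hy]
    exact mod_cast hf.comp (ih (hf.of_le (by norm_cast; omega)))

theorem iteratedDeriv_two_of_hasDerivAt (hf : ContDiff ℝ 1 f)
    (hy : ∀ t, HasDerivAt y (f (y t)) t) (t : ℝ) :
    iteratedDeriv 2 y t = fderiv ℝ f (y t) (f (y t)) := by
  rw [iteratedDeriv_succ', iteratedDeriv_one, deriv_eq_comp_of_hasDerivAt hy,
    fderiv_comp_deriv _ (hf.differentiable one_ne_zero _) (hy t).differentiableAt, (hy t).deriv]

theorem iteratedDeriv_three_of_hasDerivAt (hf : ContDiff ℝ 2 f)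
    (hy : ∀ t, HasDerivAt y (f (y t)) t) (t : ℝ) :
    iteratedDeriv 3 y t = iteratedFDeriv ℝ 2 f (y t) (fun _ ↦ f (y t)) +
      fderiv ℝ f (y t) (fderiv ℝ f (y t) (f (y t))) := by
  have hy₂ : ContDiff ℝ 2 y := contDiff_succ_of_hasDerivAt (hf.of_le one_le_two) hy
  rw [iteratedDeriv_succ', deriv_eq_comp_of_hasDerivAt hy,
    iteratedDeriv_vcomp_two hf.contDiffAt hy₂.contDiffAt, (hy t).deriv,
    iteratedDeriv_two_of_hasDerivAt (hf.of_le one_le_two) hy]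

end ODE

section Curve

variable {E F : Type*} [NormedAddCommGroup E] [NormedSpace ℝ E] [NormedAddCommGroup F]
  [NormedSpace ℝ F] (a : E) {w : ℝ → E} {f : E → F}

theorem hasDerivAt_const_add_smul_self {w' : E} {t : ℝ} (hw : HasDerivAt w w' t) :
    HasDerivAt (fun h ↦ a + h • w h) (t • w' + w t) t := by
  simpa using ((hasDerivAt_id t).smul hw).const_add a

theorem deriv_const_add_smul_self_zero (hw : DifferentiableAt ℝ w 0) :
    deriv (fun h ↦ a + h • w h) 0 = w 0 := by
  simpa using (hasDerivAt_const_add_smul_self a hw.hasDerivAt).deriv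

theorem iteratedDeriv_two_const_add_smul_self_zero (hw : ContDiff ℝ 2 w) :
    iteratedDeriv 2 (fun h ↦ a + h • w h) 0 = (2 : ℝ) • deriv w 0 := by
  have hw₁ : Differentiable ℝ w := hw.differentiable two_ne_zero
  have hw₂ : DifferentiableAt ℝ (deriv w) 0 :=
    (hw.iterate_deriv' 1 1).differentiable one_ne_zero 0
  have hderiv : deriv (fun h ↦ a + h • w h) = fun h ↦ h • deriv w h + w h :=
    funext fun t ↦ (hasDerivAt_const_add_smul_self a (hw₁ t).hasDerivAt).deriv
  rw [iteratedDeriv_succ', iteratedDeriv_one, hderiv]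
  simpa [two_smul] using
    (((hasDerivAt_id (0 : ℝ)).fun_smul hw₂.hasDerivAt).fun_add (hw₁ 0).hasDerivAt).deriv

theorem deriv_comp_const_add_smul_self_zero (hf : DifferentiableAt ℝ f a)
    (hw : DifferentiableAt ℝ w 0) :
    deriv (fun h ↦ f (a + h • w h)) 0 = fderiv ℝ f a (w 0) := by
  have hc : DifferentiableAt ℝ (fun h ↦ a + h • w h) 0 := by fun_prop
  rw [← Function.comp_def, fderiv_comp_deriv _ (by simpa using hf) hc,
    deriv_const_add_smul_self_zero a hw]
  simp

theorem iteratedDeriv_two_comp_const_add_smul_self_zero (hf : ContDiff ℝ 2 f)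
    (hw : ContDiff ℝ 2 w) :
    iteratedDeriv 2 (fun h ↦ f (a + h • w h)) 0 =
      iteratedFDeriv ℝ 2 f a (fun _ ↦ w 0) + (2 : ℝ) • fderiv ℝ f a (deriv w 0) := by
  have hc : ContDiff ℝ 2 (fun h ↦ a + h • w h) := by fun_prop
  rw [← Function.comp_def, iteratedDeriv_vcomp_two hf.contDiffAt hc.contDiffAt,
    deriv_const_add_smul_self_zero a (hw.differentiable two_ne_zero 0),
    iteratedDeriv_two_const_add_smul_self_zero a hw]
  simp

end Curve

section Slope

variable {E : Type*}

/-- The Butcher form of SSPRK3: weights `1/6, 1/6, 2/3`, third stage `y + (h/4)(f y + f y₁)`. -/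
noncomputable def ssprk3Slope [AddCommGroup E] [Module ℝ E] (f : E → E) (a : E) (h : ℝ) : E :=
  (6⁻¹ : ℝ) • (f a + f (a + h • f a) +
    (4 : ℝ) • f (a + h • (4⁻¹ : ℝ) • (f a + f (a + h • f a))))

theorem ssprk3Step_eq_add_smul_ssprk3Slope [AddCommGroup E] [Module ℝ E] (h : ℝ) (f : E → E)
    (a : E) : ssprk3Step h f a = a + h • ssprk3Slope f a h := by
  have hy₂ : (3 / 4 : ℝ) • a + (1 / 4 : ℝ) • (a + h • f a) + ((1 / 4 : ℝ) * h) • f (a + h • f a) =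
      a + h • (4⁻¹ : ℝ) • (f a + f (a + h • f a)) := by
    module
  simp only [ssprk3Step, hy₂, ssprk3Slope]
  module

variable [NormedAddCommGroup E] [NormedSpace ℝ E] {f : E → E} (a : E)

theorem contDiff_ssprk3Slope {n : WithTop ℕ∞} (hf : ContDiff ℝ n f) :
    ContDiff ℝ n (ssprk3Slope f a) := by
  unfold ssprk3Slope
  fun_prop

theorem ssprk3Slope_zero : ssprk3Slope f a 0 = f a := by
  simp only [ssprk3Slope, zero_smul, add_zero]
  module

theorem iteratedDeriv_ssprk3Slope {n : ℕ} (hn : n ≠ 0) (hf : ContDiff ℝ n f) (x : ℝ) :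
    iteratedDeriv n (ssprk3Slope f a) x =
      (6⁻¹ : ℝ) • (iteratedDeriv n (fun h ↦ f (a + h • f a)) x +
        (4 : ℝ) • iteratedDeriv n (fun h ↦ f (a + h • (4⁻¹ : ℝ) • (f a + f (a + h • f a)))) x) := by
  unfold ssprk3Slope
  rw [iteratedDeriv_fun_const_smul_field, iteratedDeriv_fun_add (by fun_prop) (by fun_prop),
    iteratedDeriv_const_add (Nat.pos_of_ne_zero hn), iteratedDeriv_fun_const_smul_field]

theorem deriv_ssprk3Slope_zero (hf : ContDiff ℝ 1 f) :
    deriv (ssprk3Slope f a) 0 = (2⁻¹ : ℝ) • fderiv ℝ f a (f a) := by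
  have hfd : Differentiable ℝ f := hf.differentiable one_ne_zero
  rw [← iteratedDeriv_one, iteratedDeriv_ssprk3Slope a one_ne_zero hf, iteratedDeriv_one,
    iteratedDeriv_one, deriv_comp_const_add_smul_self_zero a (hfd a) (by fun_prop),
    deriv_comp_const_add_smul_self_zero a (hfd a) (by fun_prop)]
  simp only [zero_smul, add_zero, map_smul, map_add]
  module

theorem iteratedDeriv_two_ssprk3Slope_zero (hf : ContDiff ℝ 2 f) :
    iteratedDeriv 2 (ssprk3Slope f a) 0 = (3⁻¹ : ℝ) •
      (iteratedFDeriv ℝ 2 f a (fun _ ↦ f a) + fderiv ℝ f a (fderiv ℝ f a (f a))) := by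
  have hfd : Differentiable ℝ f := hf.differentiable two_ne_zero
  have hw₀ : (4⁻¹ : ℝ) • (f a + f (a + (0 : ℝ) • f a)) = (2⁻¹ : ℝ) • f a := by
    rw [zero_smul, add_zero]
    module
  rw [iteratedDeriv_ssprk3Slope a two_ne_zero hf,
    iteratedDeriv_two_comp_const_add_smul_self_zero a hf (by fun_prop),
    iteratedDeriv_two_comp_const_add_smul_self_zero a hf (by fun_prop),
    deriv_fun_const_smul_field, deriv_const_add,
    deriv_comp_const_add_smul_self_zero a (hfd a) (by fun_prop), hw₀,
    (iteratedFDeriv ℝ 2 f a).map_smul_univ (fun _ ↦ (2⁻¹ : ℝ)) (fun _ ↦ f a)]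
  simp only [deriv_const, map_zero, smul_zero, add_zero, Fin.prod_univ_two, map_smul]
  module

theorem add_smul_taylorWithinEval_ssprk3Slope_eq {y : ℝ → E} (hf : ContDiff ℝ 2 f)
    (hy : ∀ t, HasDerivAt y (f (y t)) t) (t₀ h : ℝ) :
    y t₀ + h • taylorWithinEval (ssprk3Slope f (y t₀)) 2 univ 0 h =
      taylorWithinEval y 3 univ t₀ (t₀ + h) := by
  simp only [taylor_within_apply, Finset.sum_range_succ, Finset.sum_range_zero,
    iteratedDerivWithin_univ, iteratedDeriv_zero, iteratedDeriv_one, ssprk3Slope_zero,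
    deriv_ssprk3Slope_zero _ (hf.of_le one_le_two), iteratedDeriv_two_ssprk3Slope_zero _ hf,
    (hy t₀).deriv, iteratedDeriv_two_of_hasDerivAt (hf.of_le one_le_two) hy,
    iteratedDeriv_three_of_hasDerivAt hf hy]
  norm_num [Nat.factorial]
  module

end Slope

/-- If `f : ℝ^d → ℝ^d` is three times continuously differentiable and `y` solves
`y' = f(y)`, then at every time `t₀` the one-step (local truncation) error of SSPRK3 is
of fourth order: `‖Φ₃(h, f, y(t₀)) − y(t₀ + h)‖ ≤ K·h⁴` for all sufficiently small
`h > 0`. -/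
theorem ssprk3_local_truncation_error_fourth_order
    {d : ℕ} (f : EuclideanSpace ℝ (Fin d) → EuclideanSpace ℝ (Fin d))
    (hf : ContDiff ℝ 3 f)
    (y : ℝ → EuclideanSpace ℝ (Fin d))
    (hy : ∀ t : ℝ, HasDerivAt y (f (y t)) t) :
    ∀ t₀ : ℝ, ∃ K > (0 : ℝ), ∃ δ > (0 : ℝ), ∀ h ∈ Set.Ioc (0 : ℝ) δ,
      ‖ssprk3Step h f (y t₀) - y (t₀ + h)‖ ≤ K * h ^ 4 := by
  intro t₀
  set M := ssprk3Slope f (y t₀)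
  have hM₃ : ContDiff ℝ (2 + 1 : ℕ) M := contDiff_ssprk3Slope _ hf
  have hy₄ : ContDiff ℝ (3 + 1 : ℕ) y := contDiff_succ_of_hasDerivAt hf hy
  have hM := isBigO_sub_taylorWithinEval_univ hM₃ 0
  have hY := (isBigO_sub_taylorWithinEval_univ hy₄ t₀).comp_tendsto
    ((continuous_const_add t₀).tendsto' 0 t₀ (add_zero t₀))
  have hsplit : ∀ h : ℝ, ssprk3Step h f (y t₀) - y (t₀ + h) =
      h • (M h - taylorWithinEval M 2 univ 0 h) -
        (y (t₀ + h) - taylorWithinEval y 3 univ t₀ (t₀ + h)) := fun h ↦ by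
    rw [ssprk3Step_eq_add_smul_ssprk3Slope,
      ← add_smul_taylorWithinEval_ssprk3Slope_eq (hf.of_le (by norm_num)) hy]
    module
  refine exists_pos_bound_Ioc_of_isBigO_pow ?_
  simp_rw [hsplit]
  refine (((isBigO_refl (fun h : ℝ ↦ h) _).smul hM).congr_right fun h ↦ ?_).sub
    (hY.congr_right fun h ↦ ?_)
  · simp only [sub_zero, smul_eq_mul]
    ring
  · simp
end
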